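/- Let p = [b_1^{a_1} ⋯ b_r^{a_r}] (b_1 ≥ ⋯ ≥ b_r) be an orthogonal partition of 2n+1. Then Σ_{i : b_i odd} a_i is odd, so 2n* = (Σ_{i : b_i odd} a_i) − 1; set P := [p_1 p_1 (2n*)] (the union of two copies of p_1 and one extra part 2n*, omitted if 2n* = 0), which is a symplectic partition of 2n. Then P^{Sp_{2n}} = ((p^-)_{Sp_{2n}})^t if and only if (P^t)_{Sp_{2n}} = (p^-)_{Sp_{2n}}. -/

import Mathlib

namespace JiangWF

/-- `sCount p i` : the number of parts of `p` that are `≥ i`. -/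
def sCount (p : Multiset ℕ) (i : ℕ) : ℕ := (p.filter (fun a => i ≤ a)).card

/-- `rCount p i` : the number of parts of `p` equal to `i`. -/
def rCount (p : Multiset ℕ) (i : ℕ) : ℕ := p.count i

/-- The largest part of `p` (`0` for the empty partition). -/
def maxPart (p : Multiset ℕ) : ℕ := p.sup

/-- The smallest part of `p` (`0` for the empty partition). -/
noncomputable def minPart (p : Multiset ℕ) : ℕ := sInf {a : ℕ | a ∈ p}

/-- The transpose partition: its `i`-th part is `sCount p i`, for `1 ≤ i ≤ maxPart p`. -/
def transpose (p : Multiset ℕ) : Multiset ℕ :=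
  (Multiset.range (maxPart p)).map fun i => sCount p (i + 1)

/-- The sum of the `m` largest parts of `p`. -/
def topSum (p : Multiset ℕ) (m : ℕ) : ℕ :=
  ∑ i ∈ Finset.Icc 1 p.sum, min m (sCount p i)

/-- Dominance order: `domLE p q` means `p ≤ q`. -/
def domLE (p q : Multiset ℕ) : Prop := ∀ m, topSum p m ≤ topSum q m

/-- `p` is a partition of `N`: all parts positive, summing to `N`. -/
def IsPartitionOf (p : Multiset ℕ) (N : ℕ) : Prop := (∀ a ∈ p, 0 < a) ∧ p.sum = N

/-- Symplectic partition: every odd part occurs with even multiplicity. -/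
def IsSymplectic (p : Multiset ℕ) : Prop := ∀ a, a % 2 = 1 → Even (p.count a)

/-- Orthogonal partition: every even part occurs with even multiplicity. -/
def IsOrthogonal (p : Multiset ℕ) : Prop := ∀ a, a % 2 = 0 → Even (p.count a)

/-- `p^-`: decrease the smallest part by one (deleting it if it becomes `0`). -/
noncomputable def pMinus (p : Multiset ℕ) : Multiset ℕ :=
  if minPart p ≤ 1 then p.erase (minPart p)
  else (minPart p - 1) ::ₘ p.erase (minPart p)

/-- `p^+`: increase the largest part by one. -/
def pPlus (p : Multiset ℕ) : Multiset ℕ := (maxPart p + 1) ::ₘ p.erase (maxPart p)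

/-- `p^{+-}`: increase the largest part by one and decrease the smallest by one. -/
noncomputable def pPM (p : Multiset ℕ) : Multiset ℕ := pMinus (pPlus p)

/-- `p₁ = [⌊b_1/2⌋^{a_1} ⋯ ⌊b_r/2⌋^{a_r}]^t` (discarding zero entries before transposing). -/
def pOne (p : Multiset ℕ) : Multiset ℕ :=
  transpose ((p.map fun b => b / 2).filter fun x => 0 < x)

/-- `Σ_{i : b_i odd} a_i`: the number of odd parts of `p`. -/
def oddMult (p : Multiset ℕ) : ℕ := (p.filter fun a => a % 2 = 1).card

/-- `n* = ⌊(Σ_{i : b_i odd} a_i)/2⌋`. -/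
def nStar (p : Multiset ℕ) : ℕ := oddMult p / 2

/-- Append an extra part `m` to `q`, omitted if `m = 0`. -/
def addPart (m : ℕ) (q : Multiset ℕ) : Multiset ℕ := if m = 0 then q else m ::ₘ q

/-- `c` is the `Sp`-collapse of `p`: the maximal symplectic partition `≤ p` in dominance. -/
def IsSpCollapse (p c : Multiset ℕ) : Prop :=
  IsPartitionOf c p.sum ∧ IsSymplectic c ∧ domLE c p ∧
    ∀ c', IsPartitionOf c' p.sum → IsSymplectic c' → domLE c' p → domLE c' c

/-- `c` is the `SO`-collapse of `p`: the maximal orthogonal partition `≤ p` in dominance. -/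
def IsSOCollapse (p c : Multiset ℕ) : Prop :=
  IsPartitionOf c p.sum ∧ IsOrthogonal c ∧ domLE c p ∧
    ∀ c', IsPartitionOf c' p.sum → IsOrthogonal c' → domLE c' p → domLE c' c

/-- `e` is the `Sp`-expansion of `p`: the minimal special symplectic partition `≥ p`. -/
def IsSpExpansion (p e : Multiset ℕ) : Prop :=
  IsPartitionOf e p.sum ∧ IsSymplectic e ∧ IsSymplectic (transpose e) ∧ domLE p e ∧
    ∀ e', IsPartitionOf e' p.sum → IsSymplectic e' → IsSymplectic (transpose e') →
      domLE p e' → domLE e e'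

/-- `e` is the `SO_{2n+1}`-expansion of `p`: the minimal special orthogonal partition `≥ p`
(odd case: special means the transpose is orthogonal). -/
def IsSOOddExpansion (p e : Multiset ℕ) : Prop :=
  IsPartitionOf e p.sum ∧ IsOrthogonal e ∧ IsOrthogonal (transpose e) ∧ domLE p e ∧
    ∀ e', IsPartitionOf e' p.sum → IsOrthogonal e' → IsOrthogonal (transpose e') →
      domLE p e' → domLE e e'

/-- `e` is the `SO_{2n}`-expansion of `p`: the minimal special orthogonal partition `≥ p`
(even case: special means the transpose is symplectic). -/
def IsSOEvenExpansion (p e : Multiset ℕ) : Prop :=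
  IsPartitionOf e p.sum ∧ IsOrthogonal e ∧ IsSymplectic (transpose e) ∧ domLE p e ∧
    ∀ e', IsPartitionOf e' p.sum → IsOrthogonal e' → IsSymplectic (transpose e') →
      domLE p e' → domLE e e'

/-- `dim_C(q)` for a symplectic partition `q` of `2k`:
`2k² + k − (1/2)Σ s_i(q)² − (1/2)Σ_{i odd} r_i(q)` (note `2k² + k = (|q|² + |q|)/2`). -/
def dimC (p : Multiset ℕ) : ℚ :=
  ((p.sum : ℚ) ^ 2 + (p.sum : ℚ)) / 2
    - (∑ i ∈ Finset.Icc 1 p.sum, (sCount p i : ℚ) ^ 2) / 2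
    - (∑ i ∈ Finset.Icc 1 p.sum, if i % 2 = 1 then (rCount p i : ℚ) else 0) / 2

/-- `dim_B(q)` for an orthogonal partition `q` of `2k+1`:
`2k² + k − (1/2)Σ s_i(q)² + (1/2)Σ_{i odd} r_i(q)` (note `2k² + k = (|q|² − |q|)/2`). -/
def dimB (p : Multiset ℕ) : ℚ :=
  ((p.sum : ℚ) ^ 2 - (p.sum : ℚ)) / 2
    - (∑ i ∈ Finset.Icc 1 p.sum, (sCount p i : ℚ) ^ 2) / 2
    + (∑ i ∈ Finset.Icc 1 p.sum, if i % 2 = 1 then (rCount p i : ℚ) else 0) / 2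

/-- `dim_D(q)` for an orthogonal partition `q` of `2k`:
`2k² − k − (1/2)Σ s_i(q)² + (1/2)Σ_{i odd} r_i(q)` (note `2k² − k = (|q|² − |q|)/2`). -/
def dimD (p : Multiset ℕ) : ℚ :=
  ((p.sum : ℚ) ^ 2 - (p.sum : ℚ)) / 2
    - (∑ i ∈ Finset.Icc 1 p.sum, (sCount p i : ℚ) ^ 2) / 2
    + (∑ i ∈ Finset.Icc 1 p.sum, if i % 2 = 1 then (rCount p i : ℚ) else 0) / 2

/-!
Everything rests on one fact: for a symplectic partition `P`, the `Sp`-expansion of `P` is the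
transpose of the `Sp`-collapse `c` of `Pᵗ`. The heart of it is that `c` is special. Otherwise
some odd `z` has `s_z(c)` and `s_{z+1}(c)` both odd, and replacing two parts `z, z` of `c` by
`z + 1, z - 1` gives a symplectic partition strictly above `c` that is still dominated by `Pᵗ`.
Indeed, for `s_{z+1}(c) < m < s_z(c)` the sum of the `m` largest parts of `c` has parity `m + 1`,
and if the corresponding sum for `Pᵗ` were equal to it, the `m`-th part of `Pᵗ` would be `z`
and that sum would have parity `m`, the partial sums of `Pᵗ` at even `m` being even. Granting
that `c` is special, `P^{Sp} ≤ cᵗ` by minimality of the expansion and `cᵗ ≤ P^{Sp}` by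
maximality of the collapse, after transposing. Hence `P^{Sp} = c₁ᵗ ↔ c = c₁`, transposition
being injective on partitions.
-/

section sCount

lemma sCount_zero (i : ℕ) : sCount 0 i = 0 := rfl

lemma sCount_cons (a : ℕ) (p : Multiset ℕ) (i : ℕ) :
    sCount (a ::ₘ p) i = sCount p i + if i ≤ a then 1 else 0 := by
  simp only [sCount, Multiset.filter_cons]
  split_ifs <;> simp

lemma sCount_antitone (p : Multiset ℕ) : Antitone (sCount p) := fun _ _ h =>
  Multiset.card_le_card (Multiset.monotone_filter_right p fun _ ha => h.trans ha)

lemma sCount_le_sum (p : Multiset ℕ) {i : ℕ} (hi : 1 ≤ i) : sCount p i ≤ p.sum := by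
  have hcard : sCount p i ≤ (p.filter (i ≤ ·)).sum :=
    calc sCount p i = Multiset.card (p.filter (i ≤ ·)) • 1 := by simp [sCount]
      _ ≤ _ := Multiset.card_nsmul_le_sum fun _ ha => hi.trans (Multiset.of_mem_filter ha)
  obtain ⟨u, hu⟩ := Multiset.le_iff_exists_add.mp (Multiset.filter_le (i ≤ ·) p)
  have := congrArg Multiset.sum hu
  rw [Multiset.sum_add] at this
  omega

lemma sCount_pos_iff (p : Multiset ℕ) {i : ℕ} (hi : 1 ≤ i) :
    0 < sCount p i ↔ i ≤ maxPart p := by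
  rw [sCount, Multiset.card_pos_iff_exists_mem]
  constructor
  · rintro ⟨a, ha⟩
    exact (Multiset.of_mem_filter ha).trans (Multiset.le_sup (Multiset.mem_of_mem_filter ha))
  · intro h
    by_contra! hne
    have : maxPart p ≤ i - 1 := Multiset.sup_le.mpr fun a ha => by
      by_contra! hai
      exact hne a (Multiset.mem_filter_of_mem ha (by omega))
    omega

lemma sCount_eq_count_add_sCount_succ (p : Multiset ℕ) (a : ℕ) :
    sCount p a = p.count a + sCount p (a + 1) := by
  induction p using Multiset.induction_on with
  | empty => rfl
  | cons b s ih =>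
    rw [sCount_cons, sCount_cons, Multiset.count_cons, ih]
    split_ifs <;> omega

lemma eq_of_sCount_eq {p q : Multiset ℕ} (hp : ∀ a ∈ p, 0 < a) (hq : ∀ a ∈ q, 0 < a)
    (h : ∀ i, 1 ≤ i → sCount p i = sCount q i) : p = q := by
  ext a
  rcases Nat.eq_zero_or_pos a with rfl | ha
  · rw [Multiset.count_eq_zero.mpr fun h0 => (hp 0 h0).false,
      Multiset.count_eq_zero.mpr fun h0 => (hq 0 h0).false]
  · have := sCount_eq_count_add_sCount_succ p a
    have := sCount_eq_count_add_sCount_succ q a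
    have := h a ha
    have := h (a + 1) (by omega)
    omega

end sCount

section transpose

lemma sCount_transpose (p : Multiset ℕ) (j : ℕ) :
    sCount (transpose p) j
      = ((Finset.range (maxPart p)).filter fun k => j ≤ sCount p (k + 1)).card := by
  rw [sCount, transpose, ← Multiset.countP_eq_card_filter, Multiset.countP_map]
  rfl

lemma le_sCount_transpose_iff (p : Multiset ℕ) {i j : ℕ} (hi : 1 ≤ i) (hj : 1 ≤ j) :
    i ≤ sCount (transpose p) j ↔ j ≤ sCount p i := by
  rw [sCount_transpose]
  constructor
  · intro h
    by_contra! hlt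
    have hsub : (Finset.range (maxPart p)).filter (fun k => j ≤ sCount p (k + 1))
        ⊆ Finset.range (i - 1) := by
      intro k hk
      rw [Finset.mem_filter] at hk
      rw [Finset.mem_range]
      by_contra! hki
      have := sCount_antitone p (show i ≤ k + 1 by omega)
      omega
    have := Finset.card_le_card hsub
    rw [Finset.card_range] at this
    omega
  · intro h
    have hiM : i ≤ maxPart p := (sCount_pos_iff p hi).mp (by omega)
    have hsub : Finset.range i
        ⊆ (Finset.range (maxPart p)).filter fun k => j ≤ sCount p (k + 1) := by
      intro k hk
      rw [Finset.mem_range] at hk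
      rw [Finset.mem_filter, Finset.mem_range]
      exact ⟨by omega, h.trans (sCount_antitone p (by omega))⟩
    simpa using Finset.card_le_card hsub

lemma pos_of_mem_transpose (p : Multiset ℕ) : ∀ a ∈ transpose p, 0 < a := by
  intro a ha
  obtain ⟨k, hk, rfl⟩ := Multiset.mem_map.mp ha
  exact (sCount_pos_iff p (by omega)).mpr (by simpa using hk)

lemma sum_Icc_one_eq_sum_range (B : ℕ) (f : ℕ → ℕ) :
    ∑ i ∈ Finset.Icc 1 B, f i = ∑ k ∈ Finset.range B, f (k + 1) := by
  rw [Finset.range_eq_Ico, Finset.sum_Ico_add' f 0 B 1, zero_add,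
    Finset.Ico_add_one_right_eq_Icc]

lemma min_eq_card_filter_Icc (m X : ℕ) : min m X = ((Finset.Icc 1 m).filter (· ≤ X)).card := by
  rw [show (Finset.Icc 1 m).filter (· ≤ X) = Finset.Icc 1 (min m X) by ext; simp; omega]
  simp

lemma sum_Icc_sCount (p : Multiset ℕ) {B : ℕ} (h : ∀ a ∈ p, a ≤ B) :
    ∑ i ∈ Finset.Icc 1 B, sCount p i = p.sum := by
  induction p using Multiset.induction_on with
  | empty => simp [sCount_zero]
  | cons a s ih =>
    have hcol : (∑ i ∈ Finset.Icc 1 B, if i ≤ a then 1 else 0) = a := by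
      rw [← Finset.card_filter, ← min_eq_card_filter_Icc,
        min_eq_right (h a (Multiset.mem_cons_self a s))]
    simp only [sCount_cons, Multiset.sum_cons, Finset.sum_add_distrib, hcol,
      ih fun b hb => h b (Multiset.mem_cons_of_mem hb)]
    omega

lemma sum_transpose (p : Multiset ℕ) : (transpose p).sum = p.sum := by
  rw [← sum_Icc_sCount p fun _ ha => Multiset.le_sup ha, sum_Icc_one_eq_sum_range]
  rfl

lemma transpose_transpose {p : Multiset ℕ} (hp : ∀ a ∈ p, 0 < a) :
    transpose (transpose p) = p := by
  refine eq_of_sCount_eq (pos_of_mem_transpose _) hp fun j hj => eq_of_forall_le_iff fun i => ?_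
  rcases Nat.eq_zero_or_pos i with rfl | hi
  · simp
  · rw [le_sCount_transpose_iff _ hi hj, le_sCount_transpose_iff _ hj hi]

lemma transpose_inj {p q : Multiset ℕ} (hp : ∀ a ∈ p, 0 < a) (hq : ∀ a ∈ q, 0 < a) :
    transpose p = transpose q ↔ p = q :=
  ⟨fun h => by rw [← transpose_transpose hp, h, transpose_transpose hq], congrArg transpose⟩

end transpose

section topSum

lemma topSum_transpose (p : Multiset ℕ) (m : ℕ) :
    topSum (transpose p) m = ∑ k ∈ Finset.Icc 1 m, sCount p k := by
  have hcol : ∀ i ∈ Finset.Icc 1 p.sum, min m (sCount (transpose p) i)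
      = ∑ k ∈ Finset.Icc 1 m, if i ≤ sCount p k then 1 else 0 := fun i hi => by
    rw [min_eq_card_filter_Icc, Finset.card_filter]
    refine Finset.sum_congr rfl fun k hk => ?_
    exact if_congr (le_sCount_transpose_iff p (Finset.mem_Icc.mp hk).1 (Finset.mem_Icc.mp hi).1)
      rfl rfl
  rw [topSum, sum_transpose, Finset.sum_congr rfl hcol, Finset.sum_comm]
  refine Finset.sum_congr rfl fun k hk => ?_
  rw [← Finset.card_filter, ← min_eq_card_filter_Icc,
    min_eq_right (sCount_le_sum p (Finset.mem_Icc.mp hk).1)]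

lemma topSum_eq_sum_sCount_transpose {p : Multiset ℕ} (hp : ∀ a ∈ p, 0 < a) (m : ℕ) :
    topSum p m = ∑ k ∈ Finset.Icc 1 m, sCount (transpose p) k := by
  conv_lhs => rw [← transpose_transpose hp]
  exact topSum_transpose _ m

lemma topSum_zero (p : Multiset ℕ) : topSum p 0 = 0 := by
  simp [topSum]

lemma topSum_succ {p : Multiset ℕ} (hp : ∀ a ∈ p, 0 < a) (m : ℕ) :
    topSum p (m + 1) = topSum p m + sCount (transpose p) (m + 1) := by
  rw [topSum_eq_sum_sCount_transpose hp, topSum_eq_sum_sCount_transpose hp,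
    Finset.sum_Icc_succ_top (by omega)]

lemma domLE_antisymm {p q : Multiset ℕ} (hp : ∀ a ∈ p, 0 < a) (hq : ∀ a ∈ q, 0 < a)
    (hpq : domLE p q) (hqp : domLE q p) : p = q := by
  have htop (m : ℕ) : topSum p m = topSum q m := le_antisymm (hpq m) (hqp m)
  rw [← transpose_inj hp hq]
  refine eq_of_sCount_eq (pos_of_mem_transpose p) (pos_of_mem_transpose q) fun i hi => ?_
  obtain ⟨m, rfl⟩ : ∃ m, i = m + 1 := ⟨i - 1, by omega⟩
  have := topSum_succ hp m
  have := topSum_succ hq m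
  have := htop m
  have := htop (m + 1)
  omega

lemma Icc_one_eq_Ioc_zero (n : ℕ) : Finset.Icc 1 n = Finset.Ioc 0 n := by
  ext; simp; omega

lemma sum_Icc_sCount_add_sum_Ioc (p : Multiset ℕ) (m : ℕ) :
    ∑ k ∈ Finset.Icc 1 m, sCount p k + ∑ k ∈ Finset.Ioc m p.sum, sCount p k = p.sum := by
  rcases le_or_gt m p.sum with hm | hm
  · rw [Icc_one_eq_Ioc_zero, Finset.sum_Ioc_consecutive _ (Nat.zero_le m) hm,
      ← Icc_one_eq_Ioc_zero]
    exact sum_Icc_sCount p fun a ha => Multiset.le_sum_of_mem ha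
  · rw [Finset.Ioc_eq_empty (by omega), Finset.sum_empty, add_zero]
    exact sum_Icc_sCount p fun a ha => (Multiset.le_sum_of_mem ha).trans hm.le

lemma topSum_eq_sum_Icc_add_sum_Ioc (q : Multiset ℕ) (t : ℕ) {m : ℕ} (hm : m ≤ q.sum) :
    topSum q t = ∑ k ∈ Finset.Icc 1 m, min t (sCount q k)
      + ∑ k ∈ Finset.Ioc m q.sum, min t (sCount q k) := by
  rw [topSum, Icc_one_eq_Ioc_zero, Icc_one_eq_Ioc_zero,
    Finset.sum_Ioc_consecutive _ (Nat.zero_le m) hm]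

lemma sum_Ioc_sCount_le_of_domLE {p q : Multiset ℕ} (hs : p.sum = q.sum) (h : domLE p q)
    (m : ℕ) :
    ∑ k ∈ Finset.Ioc m p.sum, sCount p k ≤ ∑ k ∈ Finset.Ioc m q.sum, sCount q k := by
  rcases le_or_gt p.sum m with hm | hm
  · simp [Finset.Ioc_eq_empty_of_le hm]
  -- Compare the `s_{m+1}(p)` largest parts of `p` and of `q`.
  set t := sCount p (m + 1)
  have hp : topSum p t = m * t + ∑ k ∈ Finset.Ioc m p.sum, sCount p k := by
    rw [topSum_eq_sum_Icc_add_sum_Ioc p t hm.le]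
    congr 1
    · rw [Finset.sum_congr rfl fun k hk =>
        min_eq_left (sCount_antitone p (by simp only [Finset.mem_Icc] at hk; omega))]
      simp [t]
    · exact Finset.sum_congr rfl fun k hk =>
        min_eq_right (sCount_antitone p (by simp only [Finset.mem_Ioc] at hk; omega))
  have hq : topSum q t ≤ m * t + ∑ k ∈ Finset.Ioc m q.sum, sCount q k := by
    rw [topSum_eq_sum_Icc_add_sum_Ioc q t (hs ▸ hm.le)]
    gcongr ?_ + ?_
    · calc ∑ k ∈ Finset.Icc 1 m, min t (sCount q k) ≤ ∑ _k ∈ Finset.Icc 1 m, t :=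
            Finset.sum_le_sum fun _ _ => min_le_left _ _
        _ = m * t := by simp
    · exact Finset.sum_le_sum fun _ _ => min_le_right _ _
  have := h t
  omega

lemma domLE_transpose {p q : Multiset ℕ} (hs : p.sum = q.sum) (h : domLE p q) :
    domLE (transpose q) (transpose p) := by
  intro m
  rw [topSum_transpose, topSum_transpose]
  have := sum_Icc_sCount_add_sum_Ioc p m
  have := sum_Icc_sCount_add_sum_Ioc q m
  have := sum_Ioc_sCount_le_of_domLE hs h m
  omega

end topSum

section addPart

lemma sum_addPart (m : ℕ) (q : Multiset ℕ) : (addPart m q).sum = m + q.sum := by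
  unfold addPart
  split_ifs with h <;> simp [h]

lemma pos_of_mem_addPart {m : ℕ} {q : Multiset ℕ} (hq : ∀ a ∈ q, 0 < a) :
    ∀ a ∈ addPart m q, 0 < a := by
  unfold addPart
  split_ifs with h
  · exact hq
  · intro a ha
    rcases Multiset.mem_cons.mp ha with rfl | ha
    · omega
    · exact hq a ha

lemma count_addPart {m a : ℕ} (q : Multiset ℕ) (ha : a ≠ m) :
    (addPart m q).count a = q.count a := by
  unfold addPart
  split_ifs
  · rfl
  · exact Multiset.count_cons_of_ne ha q

lemma sCount_addPart (m : ℕ) (q : Multiset ℕ) {i : ℕ} (hi : 1 ≤ i) :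
    sCount (addPart m q) i = sCount q i + if i ≤ m then 1 else 0 := by
  by_cases h : m = 0
  · rw [addPart, if_pos h, if_neg (by omega), add_zero]
  · rw [addPart, if_neg h, sCount_cons]

end addPart

section parity

lemma isSymplectic_iff_sCount (c : Multiset ℕ) :
    IsSymplectic c ↔ ∀ z, z % 2 = 1 → sCount c z % 2 = sCount c (z + 1) % 2 := by
  refine forall₂_congr fun z _ => ?_
  rw [Nat.even_iff, sCount_eq_count_add_sCount_succ c z]
  omega

lemma IsSymplectic.filter {c : Multiset ℕ} (hc : IsSymplectic c) (P : ℕ → Prop)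
    [DecidablePred P] : IsSymplectic (c.filter P) := by
  intro a ha
  rw [Multiset.count_filter]
  split_ifs
  exacts [hc a ha, Even.zero]

lemma IsSymplectic.even_sum {c : Multiset ℕ} (hc : IsSymplectic c) : Even c.sum := by
  rw [Finset.sum_multiset_count]
  refine Finset.even_sum _ fun a _ => ?_
  rw [smul_eq_mul]
  rcases Nat.even_or_odd a with ha | ha
  · exact ha.mul_left _
  · exact (hc a (Nat.odd_iff.mp ha)).mul_right a

lemma even_topSum_two_mul {r : Multiset ℕ} (hr : ∀ a ∈ r, 0 < a)
    (hrsp : IsSymplectic (transpose r)) (k : ℕ) : Even (topSum r (2 * k)) := by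
  induction k with
  | zero => simp [topSum_zero]
  | succ k ih =>
    have := (isSymplectic_iff_sCount _).mp hrsp (2 * k + 1) (by omega)
    rw [Nat.even_iff] at ih ⊢
    rw [show 2 * (k + 1) = 2 * k + 1 + 1 by ring, topSum_succ hr, topSum_succ hr]
    omega

lemma topSum_mod_two_of_odd {r : Multiset ℕ} (hr : ∀ a ∈ r, 0 < a)
    (hrsp : IsSymplectic (transpose r)) {m : ℕ} (hodd : sCount (transpose r) m % 2 = 1) :
    topSum r m % 2 = m % 2 := by
  obtain ⟨k, rfl | rfl⟩ := Nat.even_or_odd' m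
  · have := Nat.even_iff.mp (even_topSum_two_mul hr hrsp k)
    omega
  · have := Nat.even_iff.mp (even_topSum_two_mul hr hrsp k)
    rw [topSum_succ hr]
    omega

end parity

section window

lemma sCount_filter_le (c : Multiset ℕ) (w i : ℕ) :
    sCount (c.filter (w ≤ ·)) i = sCount c (max w i) := by
  simp only [sCount, Multiset.filter_filter]
  congr 1
  exact Multiset.filter_congr fun a _ => by rw [max_le_iff, and_comm]

lemma topSum_sCount (c : Multiset ℕ) (w : ℕ) :
    topSum c (sCount c w) = (c.filter (w ≤ ·)).sum := by
  rw [topSum, ← sum_Icc_sCount (c.filter (w ≤ ·))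
    fun a ha => Multiset.le_sum_of_mem (Multiset.mem_of_mem_filter ha)]
  exact Finset.sum_congr rfl fun i _ => by rw [sCount_filter_le, (sCount_antitone c).map_max]

lemma sCount_transpose_eq_of_window {c : Multiset ℕ} {z k : ℕ} (hz : 1 ≤ z) (hk : 1 ≤ k)
    (h1 : sCount c (z + 1) < k) (h2 : k ≤ sCount c z) : sCount (transpose c) k = z := by
  have := (le_sCount_transpose_iff c hz hk).mpr h2
  have := mt (le_sCount_transpose_iff c (i := z + 1) (by omega) hk).mp (by omega)
  omega

lemma sCount_eq_of_transpose_window {c : Multiset ℕ} {w u : ℕ} (hw : 1 ≤ w) (hu : 1 ≤ u)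
    (h1 : w ≤ sCount (transpose c) u) (h2 : sCount (transpose c) (u + 1) < w) :
    sCount c w = u := by
  have := (le_sCount_transpose_iff c hw hu).mp h1
  have := mt (le_sCount_transpose_iff c hw (j := u + 1) (by omega)).mpr (by omega)
  omega

lemma topSum_of_window {c : Multiset ℕ} (hc : ∀ a ∈ c, 0 < a) {z m : ℕ} (hz : 1 ≤ z)
    (h1 : sCount c (z + 1) ≤ m) (h2 : m ≤ sCount c z) :
    topSum c m = (c.filter (z + 1 ≤ ·)).sum + z * (m - sCount c (z + 1)) := by
  induction m, h1 using Nat.le_induction with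
  | base => simp [topSum_sCount]
  | succ m hm ih =>
    rw [topSum_succ hc, ih (by omega), sCount_transpose_eq_of_window hz (by omega) (by omega) h2,
      show m + 1 - sCount c (z + 1) = m - sCount c (z + 1) + 1 by omega, Nat.mul_succ, add_assoc]

end window

section surgery

lemma exists_odd_of_not_isSymplectic_transpose {c : Multiset ℕ} (hcsym : IsSymplectic c)
    (hns : ¬ IsSymplectic (transpose c)) :
    ∃ z, z % 2 = 1 ∧ sCount c (z + 1) % 2 = 1 ∧ sCount c (z + 1) < sCount c z := by
  rw [isSymplectic_iff_sCount] at hns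
  push Not at hns
  obtain ⟨u, hu, hne⟩ := hns
  set a := sCount (transpose c) u
  set b := sCount (transpose c) (u + 1)
  have hba : b ≤ a := sCount_antitone _ (by omega)
  rcases Nat.mod_two_eq_zero_or_one b with hb | hb
  · have hsa : sCount c a = u :=
      sCount_eq_of_transpose_window (by omega) (by omega) le_rfl (by omega)
    have hsa1 : sCount c (a + 1) < u := by
      by_contra! h
      have := (le_sCount_transpose_iff c (by omega) (by omega)).mpr h
      omega
    have := (isSymplectic_iff_sCount c).mp hcsym a (by omega)
    exact ⟨a, by omega, by omega, by omega⟩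
  · have hsb1 : sCount c (b + 1) = u :=
      sCount_eq_of_transpose_window (by omega) (by omega) (by omega) (by omega)
    have hsb : u + 1 ≤ sCount c b :=
      (le_sCount_transpose_iff c (by omega) (by omega)).mp le_rfl
    exact ⟨b, hb, by omega, by omega⟩

lemma topSum_lt_of_window {r c : Multiset ℕ} (hr : ∀ a ∈ r, 0 < a)
    (hrsp : IsSymplectic (transpose r)) (hc : ∀ a ∈ c, 0 < a) (hcsym : IsSymplectic c)
    (hdom : domLE c r) {z m : ℕ} (hz : z % 2 = 1) (hs : sCount c (z + 1) % 2 = 1)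
    (h1 : sCount c (z + 1) < m) (h2 : m < sCount c z) : topSum c m < topSum r m := by
  refine lt_of_le_of_ne (hdom m) fun heq => ?_
  obtain ⟨k, rfl⟩ : ∃ k, m = k + 1 := ⟨m - 1, by omega⟩
  have hck := sCount_transpose_eq_of_window (by omega) (by omega) h1 h2.le
  -- Equality at `k + 1` would force the `(k + 1)`-th part of `r` to be `z`, like that of `c`;
  -- then `topSum r (k + 1) ≡ k + 1` but `topSum c (k + 1) ≡ k (mod 2)`.
  have hck1 := sCount_transpose_eq_of_window (k := k + 1 + 1) (by omega) (by omega) (by omega) h2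
  have := topSum_succ hc k
  have := topSum_succ hr k
  have := topSum_succ hc (k + 1)
  have := topSum_succ hr (k + 1)
  have := hdom k
  have := hdom (k + 1 + 1)
  have := sCount_antitone (transpose r) (show k + 1 ≤ k + 1 + 1 by omega)
  have hrk : sCount (transpose r) (k + 1) = z := by omega
  have hr_par := topSum_mod_two_of_odd hr hrsp (hrk ▸ hz)
  have hc_win := topSum_of_window hc (by omega) h1.le h2.le
  have heven := Nat.even_iff.mp (hcsym.filter (z + 1 ≤ ·)).even_sum
  have hmul : z * (k + 1 - sCount c (z + 1)) % 2 = (k + 1 - sCount c (z + 1)) % 2 := by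
    rw [Nat.mul_mod, hz, one_mul, Nat.mod_mod]
  omega

lemma isSymplectic_moveBox {z : ℕ} {d : Multiset ℕ} (hz : z % 2 = 1)
    (h : IsSymplectic (z ::ₘ z ::ₘ d)) : IsSymplectic (addPart (z - 1) ((z + 1) ::ₘ d)) := by
  intro a ha
  have := h a ha
  rw [count_addPart _ (by omega), Multiset.count_cons_of_ne (by omega)]
  rw [Multiset.count_cons, Multiset.count_cons] at this
  rw [Nat.even_iff] at this ⊢
  split_ifs at this <;> omega

lemma sCount_moveBox (z : ℕ) (d : Multiset ℕ) {i : ℕ} (hi : 1 ≤ i) :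
    sCount (addPart (z - 1) ((z + 1) ::ₘ d)) i + (if i = z then 1 else 0)
      = sCount (z ::ₘ z ::ₘ d) i + if i = z + 1 then 1 else 0 := by
  simp only [sCount_addPart _ _ hi, sCount_cons]
  split_ifs <;> omega

lemma topSum_moveBox {z : ℕ} (hz : 1 ≤ z) (d : Multiset ℕ) (m : ℕ) :
    topSum (addPart (z - 1) ((z + 1) ::ₘ d)) m = topSum (z ::ₘ z ::ₘ d) m
      + if sCount (z ::ₘ z ::ₘ d) (z + 1) < m ∧ m < sCount (z ::ₘ z ::ₘ d) z
        then 1 else 0 := by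
  set c := z ::ₘ z ::ₘ d
  set c' := addPart (z - 1) ((z + 1) ::ₘ d)
  have hsum : c'.sum = c.sum := by
    simp only [c, c', sum_addPart, Multiset.sum_cons]
    omega
  have hgap : sCount c (z + 1) + 2 ≤ sCount c z := by
    have := sCount_antitone d (show z ≤ z + 1 by omega)
    simp only [c, sCount_cons]
    split_ifs <;> omega
  have hz_mem : z ∈ Finset.Icc 1 c.sum := by simp [c]; omega
  have hz1_mem : z + 1 ∈ Finset.Icc 1 c.sum := by simp [c]; omega
  have key : ∀ i ∈ Finset.Icc 1 c.sum,
      min m (sCount c' i) + ((if i = z then min m (sCount c z) else 0)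
        + (if i = z + 1 then min m (sCount c (z + 1)) else 0))
      = min m (sCount c i) + ((if i = z then min m (sCount c z - 1) else 0)
        + (if i = z + 1 then min m (sCount c (z + 1) + 1) else 0)) := by
    intro i hi
    have : sCount c' i + (if i = z then 1 else 0) = sCount c i + if i = z + 1 then 1 else 0 :=
      sCount_moveBox z d (Finset.mem_Icc.mp hi).1
    rcases eq_or_ne i z with rfl | h1
    · simp only [if_true, if_neg (show i ≠ i + 1 by omega)] at this ⊢
      omega
    rcases eq_or_ne i (z + 1) with rfl | h2
    · simp only [if_true, if_neg h1] at this ⊢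
      omega
    simp only [if_neg h1, if_neg h2] at this ⊢
    omega
  have := Finset.sum_congr rfl key
  simp only [Finset.sum_add_distrib, Finset.sum_ite_eq', hz_mem, hz1_mem, if_true] at this
  rw [topSum, topSum, hsum]
  split_ifs <;> omega

end surgery

theorem IsSpCollapse.isSymplectic_transpose {r c : Multiset ℕ} (hr : ∀ a ∈ r, 0 < a)
    (hrsp : IsSymplectic (transpose r)) (hcol : IsSpCollapse r c) :
    IsSymplectic (transpose c) := by
  obtain ⟨⟨hcpos, hcsum⟩, hcsym, hdom, hmax⟩ := hcol
  by_contra hns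
  obtain ⟨z, hz, hodd, hlt⟩ := exists_odd_of_not_isSymplectic_transpose hcsym hns
  have hsplit := sCount_eq_count_add_sCount_succ c z
  have hcount : 2 ≤ c.count z := by
    have := Nat.even_iff.mp (hcsym z hz)
    omega
  obtain ⟨d, rfl⟩ : ∃ d, c = z ::ₘ z ::ₘ d := by
    obtain ⟨d, hd⟩ :=
      Multiset.le_iff_exists_add.mp (Multiset.le_count_iff_replicate_le.mp hcount)
    exact ⟨d, by simp [hd, Multiset.replicate_succ]⟩
  have hc'pos : ∀ a ∈ addPart (z - 1) ((z + 1) ::ₘ d), 0 < a :=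
    pos_of_mem_addPart fun a ha => by
      rcases Multiset.mem_cons.mp ha with rfl | ha
      · omega
      · exact hcpos a (by simp [ha])
  have hc'dom : domLE (addPart (z - 1) ((z + 1) ::ₘ d)) r := fun m => by
    rw [topSum_moveBox (by omega)]
    split_ifs with hw
    · exact topSum_lt_of_window hr hrsp hcpos hcsym hdom hz hodd hw.1 hw.2
    · simpa using hdom m
  have hc'sum : (addPart (z - 1) ((z + 1) ::ₘ d)).sum = r.sum := by
    rw [← hcsum, sum_addPart]
    simp only [Multiset.sum_cons]
    omega
  have := hmax _ ⟨hc'pos, hc'sum⟩ (isSymplectic_moveBox hz hcsym) hc'dom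
    (sCount (z ::ₘ z ::ₘ d) (z + 1) + 1)
  rw [topSum_moveBox (by omega), if_pos ⟨by omega, by omega⟩] at this
  omega

theorem IsSpExpansion.eq_transpose_of_isSpCollapse {P e c : Multiset ℕ} (hP : ∀ a ∈ P, 0 < a)
    (hPsym : IsSymplectic P) (he : IsSpExpansion P e) (hc : IsSpCollapse (transpose P) c) :
    e = transpose c := by
  have hcsp : IsSymplectic (transpose c) :=
    hc.isSymplectic_transpose (pos_of_mem_transpose P) (by rwa [transpose_transpose hP])
  obtain ⟨⟨hepos, hesum⟩, -, hesp, hPe, hemin⟩ := he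
  obtain ⟨⟨hcpos, hcsum⟩, hcsym, hcP, hcmax⟩ := hc
  rw [sum_transpose] at hcsum
  refine domLE_antisymm hepos (pos_of_mem_transpose c) ?_ ?_
  · refine hemin _ ⟨pos_of_mem_transpose c, by rw [sum_transpose, hcsum]⟩ hcsp
      (by rwa [transpose_transpose hcpos]) ?_
    simpa only [transpose_transpose hP] using domLE_transpose (by rw [hcsum, sum_transpose]) hcP
  · have hec : domLE (transpose e) c :=
      hcmax _ ⟨pos_of_mem_transpose e, by rw [sum_transpose, sum_transpose, hesum]⟩ hesp
        (domLE_transpose hesum.symm hPe)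
    simpa only [transpose_transpose hepos] using
      domLE_transpose (by rw [sum_transpose, hcsum, hesum]) hec

section pOne

lemma isSymplectic_addPart_add_self (q : Multiset ℕ) {m : ℕ} (hm : Even m) :
    IsSymplectic (addPart m (q + q)) := fun a ha => by
  have ham : a ≠ m := by
    rintro rfl
    exact Nat.not_even_iff_odd.mpr (Nat.odd_iff.mpr ha) hm
  rw [count_addPart _ ham, Multiset.count_add]
  exact ⟨_, rfl⟩

lemma sum_filter_pos (s : Multiset ℕ) : (s.filter (0 < ·)).sum = s.sum := by
  induction s using Multiset.induction_on with
  | empty => rfl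
  | cons a t ih =>
    rw [Multiset.filter_cons, Multiset.sum_add, ih, Multiset.sum_cons]
    split_ifs with h
    · simp
    · simp only [Multiset.sum_zero]
      omega

lemma sum_pOne (p : Multiset ℕ) : (pOne p).sum = (p.map (· / 2)).sum := by
  rw [pOne, sum_transpose, sum_filter_pos]

lemma two_mul_sum_half_add_oddMult (p : Multiset ℕ) :
    2 * (p.map (· / 2)).sum + oddMult p = p.sum := by
  induction p using Multiset.induction_on with
  | empty => rfl
  | cons a t ih =>
    simp only [oddMult, Multiset.map_cons, Multiset.sum_cons, Multiset.filter_cons] at ih ⊢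
    split_ifs with h <;> simp <;> omega

end pOne

theorem expansion_iff_collapse_Sp_general (n : ℕ) (p : Multiset ℕ)
    (hp : IsPartitionOf p (2 * n + 1)) :
    Odd (oddMult p) ∧ 2 * nStar p = oddMult p - 1 ∧
      IsPartitionOf (addPart (2 * nStar p) (pOne p + pOne p)) (2 * n) ∧
      IsSymplectic (addPart (2 * nStar p) (pOne p + pOne p)) ∧
      ∀ e c₁ c₂ : Multiset ℕ,
        IsSpExpansion (addPart (2 * nStar p) (pOne p + pOne p)) e →
        IsSpCollapse (pMinus p) c₁ →
        IsSpCollapse (transpose (addPart (2 * nStar p) (pOne p + pOne p))) c₂ →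
        (e = transpose c₁ ↔ c₂ = c₁) := by
  have hhalf := two_mul_sum_half_add_oddMult p
  rw [hp.2] at hhalf
  have hodd : oddMult p % 2 = 1 := by omega
  have hstar : 2 * nStar p = oddMult p - 1 := by
    rw [nStar]
    omega
  have hP : IsPartitionOf (addPart (2 * nStar p) (pOne p + pOne p)) (2 * n) := by
    refine ⟨pos_of_mem_addPart fun a ha => ?_, ?_⟩
    · rcases Multiset.mem_add.mp ha with ha | ha <;> exact pos_of_mem_transpose _ a ha
    · rw [sum_addPart, Multiset.sum_add, sum_pOne]
      omega
  have hPsym := isSymplectic_addPart_add_self (pOne p) (even_two_mul (nStar p))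
  refine ⟨Nat.odd_iff.mpr hodd, hstar, hP, hPsym, fun e c₁ c₂ he hc₁ hc₂ => ?_⟩
  rw [he.eq_transpose_of_isSpCollapse hP.1 hPsym hc₂, transpose_inj hc₂.1.1 hc₁.1.1]

/-- for an orthogonal partition `p` of `2n+1`, the number of odd parts is odd,
`2n* = (Σ_{b_i odd} a_i) − 1`, `P = [p₁ p₁ (2n*)]` is a symplectic partition of `2n`, and
`P^{Sp_{2n}} = ((p^-)_{Sp_{2n}})^t` iff `(P^t)_{Sp_{2n}} = (p^-)_{Sp_{2n}}`. -/
theorem expansion_iff_collapse_Sp (n : ℕ) (p : Multiset ℕ)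
    (hp : IsPartitionOf p (2 * n + 1)) (horth : IsOrthogonal p) :
    Odd (oddMult p) ∧ 2 * nStar p = oddMult p - 1 ∧
      IsPartitionOf (addPart (2 * nStar p) (pOne p + pOne p)) (2 * n) ∧
      IsSymplectic (addPart (2 * nStar p) (pOne p + pOne p)) ∧
      ∀ e c₁ c₂ : Multiset ℕ,
        IsSpExpansion (addPart (2 * nStar p) (pOne p + pOne p)) e →
        IsSpCollapse (pMinus p) c₁ →
        IsSpCollapse (transpose (addPart (2 * nStar p) (pOne p + pOne p))) c₂ →
        (e = transpose c₁ ↔ c₂ = c₁) :=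
  expansion_iff_collapse_Sp_general n p hp

end JiangWF
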